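/- arXiv:2210.01577 — 2 statements merged into one kernel-verified Lean document; each statement's English description precedes it below -/
import Mathlib

section
/- For n ≥ 2, the subgroup ⟨x^2, yx⟩ of G_n is isomorphic to the dicyclic group of order 4n, and it contains exactly one involution, namely x^{2n}. -/
/-- Relations of the generalized quasi-dihedral group
`G_n = ⟨x, y : x^(4n) = y^2 = 1, y x y = x^(2n-1)⟩`. -/
def qdRel (n : ℕ) : Set (FreeGroup (Fin 2)) :=
  { FreeGroup.of 0 ^ (4 * n),
    FreeGroup.of 1 ^ 2,
    FreeGroup.of 1 * FreeGroup.of 0 * FreeGroup.of 1 * (FreeGroup.of 0 ^ (2 * n - 1))⁻¹ }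

/-- The generalized quasi-dihedral group of order `8n`. -/
def G (n : ℕ) : Type := PresentedGroup (qdRel n)

instance (n : ℕ) : Group (G n) := by unfold G; infer_instance

/-- The generator `x` of `G n`. -/
def x (n : ℕ) : G n := PresentedGroup.of 0

/-- The generator `y` of `G n`. -/
def y (n : ℕ) : G n := PresentedGroup.of 1

namespace QDAux

/-- the key constant `2n-1` in `ZMod (4n)`. -/
def c (n : ℕ) : ZMod (4*n) := 2*(n : ZMod (4*n)) - 1

lemma four_n (n : ℕ) : (4 : ZMod (4*n)) * (n : ZMod (4*n)) = 0 := by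
  have h : ((4*n : ℕ) : ZMod (4*n)) = 0 := ZMod.natCast_self _
  push_cast at h
  exact h

lemma c_mul_c (n : ℕ) : c n * c n = 1 := by
  have h := four_n n
  unfold c
  linear_combination ((n : ZMod (4*n)) - 1) * h

lemma c_eq (n : ℕ) (hn : 0 < n) : c n = ((2*n-1 : ℕ) : ZMod (4*n)) := by
  have : ((2*n-1 : ℕ) : ZMod (4*n)) = 2*(n : ZMod (4*n)) - 1 := by
    push_cast [Nat.cast_sub (by omega : 1 ≤ 2*n)]
    ring
  rw [this]; rfl

inductive QD (n : ℕ) : Type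
  | r : ZMod (4*n) → QD n
  | s : ZMod (4*n) → QD n
  deriving DecidableEq

namespace QD

variable {n : ℕ}

private def mul : QD n → QD n → QD n
  | r i, r j => r (i + j)
  | r i, s j => s (i + j)
  | s i, r j => s (i + c n * j)
  | s i, s j => r (i + c n * j)

private def inv : QD n → QD n
  | r i => r (-i)
  | s i => s (-(c n * i))

instance : Group (QD n) where
  mul := mul
  one := r 0
  inv := inv
  mul_assoc := by
    rintro (i | i) (j | j) (k | k) <;> simp only [(· * ·), mul] <;>
      (try simp only [show ∀ a b : ZMod (4*n), Mul.mul a b = a * b from fun _ _ => rfl]) <;> congr 1 <;>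
      first
        | ring1
        | linear_combination (-(k : ZMod (4*n))) * c_mul_c n
        | linear_combination (k : ZMod (4*n)) * c_mul_c n
  one_mul := by
    rintro (i | i) <;> simp only [(· * ·), mul] <;>
      (try simp only [show ∀ a b : ZMod (4*n), Mul.mul a b = a * b from fun _ _ => rfl]) <;>
      congr 1 <;> ring
  mul_one := by
    rintro (i | i) <;> simp only [(· * ·), mul] <;>
      (try simp only [show ∀ a b : ZMod (4*n), Mul.mul a b = a * b from fun _ _ => rfl]) <;>
      congr 1 <;> ring
  inv_mul_cancel := by
    rintro (i | i) <;> simp only [(· * ·), Inv.inv, mul, inv] <;>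
      (try simp only [show ∀ a b : ZMod (4*n), Mul.mul a b = a * b from fun _ _ => rfl]) <;>
      congr 1 <;> ring

@[simp] lemma r_mul_r (i j : ZMod (4*n)) : r i * r j = r (i + j) := rfl
@[simp] lemma r_mul_s (i j : ZMod (4*n)) : r i * s j = s (i + j) := rfl
@[simp] lemma s_mul_r (i j : ZMod (4*n)) : s i * r j = s (i + c n * j) := rfl
@[simp] lemma s_mul_s (i j : ZMod (4*n)) : s i * s j = r (i + c n * j) := rfl
@[simp] lemma one_def : (1 : QD n) = r 0 := rfl

lemma r_one_pow (k : ℕ) : (r 1 : QD n) ^ k = r (k : ZMod (4*n)) := by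
  induction k with
  | zero => simp
  | succ k ih => rw [pow_succ, ih, r_mul_r]; push_cast; ring_nf

end QD

end QDAux

namespace QDAux

lemma mk_rel {α : Type*} (rels : Set (FreeGroup α)) {w : FreeGroup α} (h : w ∈ rels) :
    PresentedGroup.mk rels w = 1 :=
  (QuotientGroup.eq_one_iff w).mpr (Subgroup.subset_normalClosure h)

lemma hx4 (n : ℕ) : x n ^ (4*n) = 1 := by
  have h : (x n) ^ (4*n) = PresentedGroup.mk (qdRel n) (FreeGroup.of 0 ^ (4*n)) := by
    rw [map_pow]; rfl
  rw [h]
  exact mk_rel _ (Set.mem_insert _ _)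

lemma hy2 (n : ℕ) : y n ^ 2 = 1 := by
  have h : (y n) ^ 2 = PresentedGroup.mk (qdRel n) (FreeGroup.of 1 ^ 2) := by
    rw [map_pow]; rfl
  refine h.trans ?_
  exact mk_rel _ (Set.mem_insert_of_mem _ (Set.mem_insert _ _))

lemma hyxy (n : ℕ) : y n * x n * y n = x n ^ (2*n-1) := by
  have h := mk_rel (qdRel n)
    (Set.mem_insert_of_mem _ (Set.mem_insert_of_mem _ rfl) :
      FreeGroup.of 1 * FreeGroup.of 0 * FreeGroup.of 1 * (FreeGroup.of 0 ^ (2*n-1))⁻¹ ∈ qdRel n)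
  rw [map_mul, map_mul, map_mul, map_inv, map_pow] at h
  exact mul_inv_eq_one.mp h

lemma y_inv (n : ℕ) : (y n)⁻¹ = y n := by
  have h := hy2 n
  rw [pow_two] at h
  exact inv_eq_of_mul_eq_one_right h

lemma y_mul_xpow (n : ℕ) (k : ℕ) : y n * x n ^ k = x n ^ ((2*n-1)*k) * y n := by
  have h : y n * x n ^ k * (y n)⁻¹ = (y n * x n * (y n)⁻¹) ^ k := by
    rw [conj_pow]
  rw [y_inv] at h
  have h2 : y n * x n * y n = x n ^ (2*n-1) := hyxy n
  rw [h2, ← pow_mul] at h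
  calc y n * x n ^ k = (y n * x n ^ k * y n) * (y n)⁻¹ := by group
    _ = x n ^ ((2*n-1)*k) * y n := by rw [h, y_inv]

lemma xpow_congr (n : ℕ) (a b : ℕ) (h : (a : ZMod (4*n)) = (b : ZMod (4*n))) :
    x n ^ a = x n ^ b := by
  have hd : orderOf (x n) ∣ 4*n := orderOf_dvd_of_pow_eq_one (hx4 n)
  exact pow_eq_pow_iff_modEq.mpr (((ZMod.natCast_eq_natCast_iff _ _ _).mp h).of_dvd hd)

/-- The map `QD n → G n`. -/
def ρfun (n : ℕ) : QD n → G n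
  | .r i => x n ^ i.val
  | .s i => x n ^ i.val * y n

lemma vc {m : ℕ} [NeZero m] (a : ZMod m) : ((a.val : ℕ) : ZMod m) = a :=
  ZMod.natCast_rightInverse a

/-- The homomorphism `QD n → G n`. -/
def ρ (n : ℕ) (hn : 0 < n) : QD n →* G n where
  toFun := ρfun n
  map_one' := by
    show x n ^ (0 : ZMod (4*n)).val = 1
    simp
  map_mul' := by
    haveI : NeZero (4*n) := ⟨by omega⟩
    have hc : ((2*n-1 : ℕ) : ZMod (4*n)) = c n := (c_eq n hn).symm
    rintro (i | i) (j | j)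
    · show x n ^ (i+j).val = x n ^ i.val * x n ^ j.val
      rw [← pow_add]
      exact xpow_congr n _ _ (by push_cast [vc]; ring)
    · show x n ^ (i+j).val * y n = x n ^ i.val * (x n ^ j.val * y n)
      rw [← mul_assoc, ← pow_add]
      congr 1
      exact xpow_congr n _ _ (by push_cast [vc]; ring)
    · show x n ^ (i + c n * j).val * y n = (x n ^ i.val * y n) * x n ^ j.val
      rw [mul_assoc, y_mul_xpow, ← mul_assoc, ← pow_add]
      congr 1
      refine xpow_congr n _ _ ?_
      push_cast [vc, hc]
      ring
    · show x n ^ (i + c n * j).val = (x n ^ i.val * y n) * (x n ^ j.val * y n)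
      rw [mul_assoc, ← mul_assoc (y n), y_mul_xpow, mul_assoc, ← pow_two, hy2,
        mul_one, ← pow_add]
      exact xpow_congr n _ _ (by push_cast [vc, hc]; ring)

/-- Images of the generators in `QD n`. -/
def πf (n : ℕ) : Fin 2 → QD n := ![QD.r 1, QD.s 0]

lemma relcheck (n : ℕ) (hn : 0 < n) : ∀ w ∈ qdRel n, FreeGroup.lift (πf n) w = 1 := by
  intro w hw
  have hc : ((2*n-1 : ℕ) : ZMod (4*n)) = c n := (c_eq n hn).symm
  rcases hw with rfl | rfl | rfl
  · rw [map_pow, FreeGroup.lift_apply_of]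
    show (QD.r 1 : QD n) ^ (4*n) = 1
    rw [QD.r_one_pow, ZMod.natCast_self, QD.one_def]
  · rw [map_pow, FreeGroup.lift_apply_of]
    show (QD.s 0 : QD n) ^ 2 = 1
    rw [pow_two, QD.s_mul_s, QD.one_def]
    congr 1
    ring
  · rw [map_mul, map_mul, map_mul, map_inv, map_pow, FreeGroup.lift_apply_of, FreeGroup.lift_apply_of]
    show QD.s 0 * QD.r 1 * QD.s 0 * ((QD.r 1 : QD n) ^ (2*n-1))⁻¹ = 1
    rw [QD.r_one_pow, QD.s_mul_r, QD.s_mul_s]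
    rw [mul_inv_eq_one]
    show QD.r _ = QD.r _
    rw [hc]
    congr 1
    ring

/-- The homomorphism `G n → QD n`. -/
def π (n : ℕ) (hn : 0 < n) : G n →* QD n := PresentedGroup.toGroup (relcheck n hn)

lemma π_x (n : ℕ) (hn : 0 < n) : π n hn (x n) = QD.r 1 :=
  PresentedGroup.toGroup.of _

lemma π_y (n : ℕ) (hn : 0 < n) : π n hn (y n) = QD.s 0 :=
  PresentedGroup.toGroup.of _

end QDAux
namespace QDAux

lemma comp_ρπ (n : ℕ) (hn : 0 < n) : (ρ n hn).comp (π n hn) = MonoidHom.id (G n) := by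
  haveI : NeZero (4*n) := ⟨by omega⟩
  apply PresentedGroup.ext
  intro i
  fin_cases i
  · show ρ n hn (π n hn (x n)) = x n
    rw [π_x]
    show x n ^ (1 : ZMod (4*n)).val = x n
    haveI : Fact (1 < 4*n) := ⟨by omega⟩
    rw [ZMod.val_one, pow_one]
  · show ρ n hn (π n hn (y n)) = y n
    rw [π_y]
    show x n ^ (0 : ZMod (4*n)).val * y n = y n
    simp

lemma comp_πρ (n : ℕ) (hn : 0 < n) : (π n hn).comp (ρ n hn) = MonoidHom.id (QD n) := by
  haveI : NeZero (4*n) := ⟨by omega⟩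
  apply MonoidHom.ext
  rintro (i | i)
  · show π n hn (x n ^ i.val) = QD.r i
    rw [map_pow, π_x, QD.r_one_pow, vc]
  · show π n hn (x n ^ i.val * y n) = QD.s i
    rw [map_mul, map_pow, π_x, π_y, QD.r_one_pow, vc, QD.r_mul_s, add_zero]

/-- The isomorphism `G n ≃* QD n`. -/
def e (n : ℕ) (hn : 0 < n) : G n ≃* QD n :=
  MonoidHom.toMulEquiv (π n hn) (ρ n hn) (comp_ρπ n hn) (comp_πρ n hn)

lemma e_apply (n : ℕ) (hn : 0 < n) (g : G n) : e n hn g = π n hn g := rfl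

/-- doubling map `ZMod (2n) → ZMod (4n)`. -/
def d (n : ℕ) (i : ZMod (2*n)) : ZMod (4*n) := ((2 * i.val : ℕ) : ZMod (4*n))

section dlemmas

variable (n : ℕ) (hn : 0 < n)
include hn

lemma d_add (i j : ZMod (2*n)) : d n (i + j) = d n i + d n j := by
  haveI : NeZero (2*n) := ⟨by omega⟩
  rw [d, d, d, ← Nat.cast_add, ZMod.natCast_eq_natCast_iff]
  have h1 : 2 * (i + j).val ≡ 2 * (i.val + j.val) [MOD 2*(2*n)] := by
    rw [ZMod.val_add]
    exact Nat.ModEq.mul_left' _ (Nat.mod_modEq _ _)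
  have h2 : 2*(2*n) = 4*n := by ring
  rw [h2] at h1
  calc 2 * (i + j).val ≡ 2 * (i.val + j.val) [MOD 4*n] := h1
    _ = 2 * i.val + 2 * j.val := by ring

lemma d_cast (k : ℕ) : d n ((k : ZMod (2*n))) = ((2*k : ℕ) : ZMod (4*n)) := by
  haveI : NeZero (2*n) := ⟨by omega⟩
  rw [d, ZMod.natCast_eq_natCast_iff]
  have h1 : 2 * ((k : ZMod (2*n)).val) ≡ 2 * k [MOD 2*(2*n)] := by
    rw [ZMod.val_natCast]
    exact Nat.ModEq.mul_left' _ (Nat.mod_modEq _ _)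
  have h2 : 2*(2*n) = 4*n := by ring
  rwa [h2] at h1

lemma d_sub (i j : ZMod (2*n)) : d n (i - j) = d n i - d n j := by
  refine eq_sub_of_add_eq ?_
  rw [← d_add n hn, sub_add_cancel]

lemma d_zero : d n 0 = 0 := by
  haveI : NeZero (2*n) := ⟨by omega⟩
  rw [d, ZMod.val_zero, mul_zero, Nat.cast_zero]

lemma c_mul_two : c n * 2 = -2 := by
  have h := four_n n
  unfold c
  linear_combination h

lemma c_mul_d (j : ZMod (2*n)) : c n * d n j = - d n j := by
  rw [d]
  push_cast
  linear_combination ((j.val : ZMod (4*n))) * c_mul_two n hn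

lemma d_n : d n ((n : ℕ) : ZMod (2*n)) = 2*(n : ZMod (4*n)) := by
  rw [d_cast n hn]
  push_cast
  ring

lemma c_add_one : c n + 1 = 2*(n : ZMod (4*n)) := by
  unfold c; ring

end dlemmas

/-- The map `QuaternionGroup n → QD n`. -/
def qfun (n : ℕ) : QuaternionGroup n → QD n
  | .a i => QD.r (d n i)
  | .xa i => QD.s (c n - d n i)

/-- The homomorphism `QuaternionGroup n → QD n`. -/
def q (n : ℕ) (hn : 0 < n) : QuaternionGroup n →* QD n where
  toFun := qfun n
  map_one' := by
    show QD.r (d n 0) = 1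
    rw [d_zero n hn, QD.one_def]
  map_mul' := by
    rintro (i | i) (j | j)
    · show QD.r (d n (i+j)) = QD.r (d n i) * QD.r (d n j)
      rw [QD.r_mul_r, d_add n hn]
    · show QD.s (c n - d n (j - i)) = QD.r (d n i) * QD.s (c n - d n j)
      rw [QD.r_mul_s, d_sub n hn]
      congr 1
      ring
    · show QD.s (c n - d n (i+j)) = QD.s (c n - d n i) * QD.r (d n j)
      rw [QD.s_mul_r, d_add n hn, c_mul_d n hn]
      congr 1
      ring
    · show QD.r (d n ((n : ZMod (2*n)) + j - i)) = QD.s (c n - d n i) * QD.s (c n - d n j)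
      rw [QD.s_mul_s, d_sub n hn, d_add n hn, d_n n hn, mul_sub, c_mul_c, c_mul_d n hn,
        ← c_add_one n hn]
      congr 1
      ring

lemma q_inj (n : ℕ) (hn : 0 < n) : Function.Injective (q n hn) := by
  haveI : NeZero (2*n) := ⟨by omega⟩
  rw [injective_iff_map_eq_one]
  rintro (i | i) h
  · have h' : QD.r (d n i) = QD.r 0 := h
    have h2 : d n i = 0 := by injection h'
    rw [d] at h2
    have h3 : 4*n ∣ 2 * i.val := (ZMod.natCast_eq_zero_iff _ _).mp h2
    have h4 : i.val < 2*n := ZMod.val_lt i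
    have h5 : 2 * i.val = 0 := Nat.eq_zero_of_dvd_of_lt h3 (by omega)
    have h5 : i.val = 0 := by omega
    have h6 : i = 0 := by
      rw [← vc i, h5, Nat.cast_zero]
    rw [h6]
    rfl
  · exact absurd h (by simp [q, qfun, QD.one_def])

lemma quat_top (n : ℕ) (hn : 0 < n) :
    Subgroup.closure ({QuaternionGroup.a 1, QuaternionGroup.xa 0} :
      Set (QuaternionGroup n)) = ⊤ := by
  haveI : NeZero (2*n) := ⟨by omega⟩
  rw [eq_top_iff]
  rintro (i | i) -
  · have h : QuaternionGroup.a i = (QuaternionGroup.a 1) ^ (i.val) := by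
      rw [QuaternionGroup.a_one_pow, vc]
    rw [h]
    exact pow_mem (Subgroup.subset_closure (Set.mem_insert _ _)) _
  · have h : QuaternionGroup.xa i = QuaternionGroup.a (-i) * QuaternionGroup.xa 0 := by
      rw [QuaternionGroup.a_mul_xa, zero_sub, neg_neg]
    rw [h]
    refine mul_mem ?_ (Subgroup.subset_closure (Set.mem_insert_of_mem _ rfl))
    have h2 : QuaternionGroup.a (-i) = (QuaternionGroup.a 1) ^ ((-i).val) := by
      rw [QuaternionGroup.a_one_pow, vc]
    rw [h2]
    exact pow_mem (Subgroup.subset_closure (Set.mem_insert _ _)) _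

lemma q_range (n : ℕ) (hn : 0 < n) :
    (q n hn).range = Subgroup.closure {QD.r 2, QD.s (c n)} := by
  rw [MonoidHom.range_eq_map, ← quat_top n hn, MonoidHom.map_closure,
    Set.image_insert_eq, Set.image_singleton]
  have h1 : q n hn (QuaternionGroup.a 1) = QD.r 2 := by
    show QD.r (d n 1) = QD.r 2
    congr 1
    rw [show ((1 : ZMod (2*n))) = ((1 : ℕ) : ZMod (2*n)) by norm_num, d_cast n hn]
    norm_num
  have h2 : q n hn (QuaternionGroup.xa 0) = QD.s (c n) := by
    show QD.s (c n - d n 0) = QD.s (c n)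
    rw [d_zero n hn, sub_zero]
  rw [h1, h2]

end QDAux
open QDAux in
theorem stmt8 (n : ℕ) (hn : 2 ≤ n) :
    Nonempty ((Subgroup.closure {x n ^ 2, y n * x n} : Subgroup (G n)) ≃* QuaternionGroup n) ∧
    x n ^ (2 * n) ∈ Subgroup.closure {x n ^ 2, y n * x n} ∧
    (∀ g : G n, g ∈ Subgroup.closure {x n ^ 2, y n * x n} →
      (orderOf g = 2 ↔ g = x n ^ (2 * n))) := by
  have h0 : 0 < n := by omega
  haveI : NeZero (4*n) := ⟨by omega⟩
  haveI : NeZero (2*n) := ⟨by omega⟩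
  let E := QDAux.e n h0
  have hEx : E (x n) = QD.r 1 := π_x n h0
  have hEy : E (y n) = QD.s 0 := π_y n h0
  have hmapH : Subgroup.map (E : G n →* QD n) (Subgroup.closure {x n ^ 2, y n * x n})
      = Subgroup.closure {QD.r 2, QD.s (c n)} := by
    rw [MonoidHom.map_closure, Set.image_insert_eq, Set.image_singleton]
    have e1 : (E : G n →* QD n) (x n ^ 2) = QD.r 2 := by
      rw [map_pow]
      show (E (x n))^2 = _
      rw [hEx, pow_two, QD.r_mul_r]
      norm_num
    have e2 : (E : G n →* QD n) (y n * x n) = QD.s (c n) := by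
      rw [map_mul]
      show E (y n) * E (x n) = _
      rw [hEx, hEy, QD.s_mul_r]
      congr 1
      ring
    rw [e1, e2]
  have hE2n : (E : G n →* QD n) (x n ^ (2*n)) = QD.r ((2*n : ℕ) : ZMod (4*n)) := by
    rw [map_pow]
    show (E (x n))^(2*n) = _
    rw [hEx, QD.r_one_pow]
  have h2nne : ((2*n : ℕ) : ZMod (4*n)) ≠ 0 := by
    rw [Ne, ZMod.natCast_eq_zero_iff]
    intro hdvd
    exact absurd (Nat.le_of_dvd (by omega) hdvd) (by omega)
  refine ⟨⟨?_⟩, ?_, ?_⟩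
  · exact (E.subgroupMap _).trans
      ((MulEquiv.subgroupCongr (hmapH.trans (q_range n h0).symm)).trans
        (MonoidHom.ofInjective (q_inj n h0)).symm)
  · rw [pow_mul]
    exact pow_mem (Subgroup.subset_closure (Set.mem_insert _ _)) n
  · intro g hg
    constructor
    · intro ho
      have hgmem : (E : G n →* QD n) g ∈ (q n h0).range := by
        rw [q_range n h0, ← hmapH]
        exact Subgroup.mem_map_of_mem _ hg
      have horder : orderOf ((E : G n →* QD n) g) = 2 := by
        rw [orderOf_injective (E : G n →* QD n) E.injective]
        exact ho
      have hsq : ((E : G n →* QD n) g)^2 = 1 := by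
        rw [← horder]
        exact pow_orderOf_eq_one _
      have hne1 : (E : G n →* QD n) g ≠ 1 := by
        intro h1
        rw [h1, orderOf_one] at horder
        norm_num at horder
      obtain ⟨w, hw⟩ := hgmem
      apply E.injective
      show (E : G n →* QD n) g = (E : G n →* QD n) (x n ^ (2*n))
      rw [hE2n]
      cases w with
      | a i =>
        have hw' : QD.r (d n i) = (E : G n →* QD n) g := hw
        rw [← hw'] at hsq hne1 ⊢
        rw [pow_two, QD.r_mul_r, QD.one_def] at hsq
        have heq : d n i + d n i = 0 := by injection hsq
        rw [d, ← Nat.cast_add] at heq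
        have hdvd : 4*n ∣ 2*i.val + 2*i.val := (ZMod.natCast_eq_zero_iff _ _).mp heq
        have hlt : i.val < 2*n := ZMod.val_lt i
        obtain ⟨k, hk⟩ := hdvd
        have hk2 : k < 2 := by
          by_contra hk2
          push_neg at hk2
          have : 4*n*2 ≤ 4*n*k := Nat.mul_le_mul_left _ hk2
          omega
        have hvals : i.val = 0 ∨ i.val = n := by interval_cases k <;> omega
        rcases hvals with hv | hv
        · exfalso
          apply hne1
          rw [d, hv, QD.one_def]
          norm_num
        · rw [d, hv]
      | xa i =>
        exfalso
        have hw' : QD.s (c n - d n i) = (E : G n →* QD n) g := hw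
        rw [← hw'] at hsq
        rw [pow_two, QD.s_mul_s, QD.one_def] at hsq
        have heq : c n - d n i + c n * (c n - d n i) = 0 := by injection hsq
        have hcomp : c n - d n i + c n * (c n - d n i) = ((2*n : ℕ) : ZMod (4*n)) := by
          rw [mul_sub, c_mul_c, c_mul_d n h0]
          push_cast
          linear_combination c_add_one n h0
        rw [hcomp] at heq
        exact h2nne heq
    · rintro rfl
      have h1 : orderOf (QD.r ((2*n:ℕ) : ZMod (4*n))) = 2 := by
        apply orderOf_eq_prime
        · rw [pow_two, QD.r_mul_r, ← Nat.cast_add, QD.one_def]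
          congr 1
          rw [show 2*n+2*n = 4*n by ring]
          exact ZMod.natCast_self _
        · rw [QD.one_def]
          intro hcon
          apply h2nne
          injection hcon
      calc orderOf (x n ^ (2*n))
          = orderOf ((E : G n →* QD n) (x n ^ (2*n))) :=
            (orderOf_injective (E : G n →* QD n) E.injective _).symm
        _ = 2 := by rw [hE2n]; exact h1
end

section
/- For n ≥ 3 odd, the group G_n has exactly 2n + 6 conjugacy classes; in particular the four classes of y, yx, yx^2, yx^3 each have size n, and the elements x^n, x^{2n}, x^{3n} are central (classes of size 1). -/
namespace QD

/-- twist unit -/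
def u (n : ℕ) : ZMod (4*n) := 2*n - 1

lemma hu (n : ℕ) : u n * u n = 1 := by
  have h : ((4*n : ℕ) : ZMod (4*n)) = 0 := ZMod.natCast_self _
  push_cast at h
  unfold u
  linear_combination ((n : ZMod (4*n)) - 1) * h

lemma two_cases (ε : ZMod 2) : ε = 0 ∨ ε = 1 := by revert ε; decide

@[ext] structure M (n : ℕ) where
  a : ZMod (4*n)
  e : ZMod 2

instance (n : ℕ) : Mul (M n) := ⟨fun g h => ⟨g.a + u n ^ g.e.val * h.a, g.e + h.e⟩⟩
instance (n : ℕ) : One (M n) := ⟨⟨0, 0⟩⟩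
instance (n : ℕ) : Inv (M n) := ⟨fun g => ⟨-(u n ^ g.e.val * g.a), g.e⟩⟩

lemma mul_def {n : ℕ} (g h : M n) : g * h = ⟨g.a + u n ^ g.e.val * h.a, g.e + h.e⟩ := rfl
lemma one_def {n : ℕ} : (1 : M n) = ⟨0, 0⟩ := rfl
lemma inv_def {n : ℕ} (g : M n) : g⁻¹ = ⟨-(u n ^ g.e.val * g.a), g.e⟩ := rfl


lemma val_one2 : ZMod.val (1 : ZMod 2) = 1 := rfl
lemma val_zero2 : ZMod.val (0 : ZMod 2) = 0 := rfl
lemma oneone : (1 + 1 : ZMod 2) = 0 := rfl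

lemma upow_add (n : ℕ) (ε δ : ZMod 2) : u n ^ (ε + δ).val = u n ^ ε.val * u n ^ δ.val := by
  rcases two_cases ε with h1 | h1 <;> rcases two_cases δ with h2 | h2 <;>
    subst h1 <;> subst h2 <;> simp [oneone, val_one2, val_zero2, pow_succ, hu n]

instance (n : ℕ) : Group (M n) where
  mul_assoc g h k := by
    simp only [mul_def, upow_add]; ext <;> simp <;> ring
  one_mul g := by simp [mul_def, one_def]
  mul_one g := by simp [mul_def, one_def]
  inv_mul_cancel g := by
    simp [mul_def, inv_def, one_def]
    rcases two_cases g.e with h | h <;> rw [h] <;> decide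

def X (n : ℕ) : M n := ⟨1, 0⟩
def Y (n : ℕ) : M n := ⟨0, 1⟩

lemma X_pow (n : ℕ) (k : ℕ) : (X n) ^ k = ⟨(k : ZMod (4*n)), 0⟩ := by
  induction k with
  | zero => simp [one_def]
  | succ k ih => rw [pow_succ, ih, mul_def]; ext <;> push_cast <;> simp [X, val_zero2]

lemma Y_mul_X_pow (n : ℕ) (k : ℕ) : Y n * (X n) ^ k = ⟨u n * k, 1⟩ := by
  rw [X_pow, mul_def]; ext <;> simp [Y, val_one2, pow_one]

/-- conjugation formula -/
lemma upow_sq (n : ℕ) (ε : ZMod 2) : u n ^ ε.val * u n ^ ε.val = 1 := by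
  rcases two_cases ε with h | h <;> rw [h] <;>
    simp [val_one2, val_zero2, pow_one, hu n]

lemma conj_formula (n : ℕ) (g k : M n) :
    g * k * g⁻¹ = ⟨u n ^ g.e.val * k.a + (1 - u n ^ k.e.val) * g.a, k.e⟩ := by
  simp only [mul_def, inv_def, upow_add]
  ext
  · simp only
    linear_combination (-(u n ^ k.e.val * g.a)) * upow_sq n g.e
  · simp only
    rcases two_cases g.e with h | h <;> rcases two_cases k.e with h' | h' <;>
      rw [h, h'] <;> decide

end QD

namespace QD

lemma mk_rel {n : ℕ} {r : FreeGroup (Fin 2)} (hr : r ∈ qdRel n) :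
    PresentedGroup.mk (qdRel n) r = 1 := by
  have : r ∈ Subgroup.normalClosure (qdRel n) := Subgroup.subset_normalClosure hr
  exact (QuotientGroup.eq_one_iff r).2 this

lemma rel1 (n : ℕ) : x n ^ (4*n) = 1 := by
  have := mk_rel (n := n) (r := FreeGroup.of 0 ^ (4*n)) (by simp [qdRel])
  rw [map_pow] at this
  exact this

lemma rel2 (n : ℕ) : y n ^ 2 = 1 := by
  have := mk_rel (n := n) (r := FreeGroup.of 1 ^ 2) (by simp [qdRel])
  rw [map_pow] at this
  exact this

lemma rel3 (n : ℕ) : y n * x n * y n = x n ^ (2*n-1) := by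
  have := mk_rel (n := n)
    (r := FreeGroup.of 1 * FreeGroup.of 0 * FreeGroup.of 1 * (FreeGroup.of 0 ^ (2*n-1))⁻¹)
    (by simp [qdRel])
  simp only [map_mul, map_inv, map_pow] at this
  rw [mul_inv_eq_one] at this
  exact this

lemma y_inv (n : ℕ) : (y n)⁻¹ = y n := by
  have h := rel2 n
  rw [pow_two] at h
  exact inv_eq_of_mul_eq_one_left h

lemma y_conj_xpow (n : ℕ) (k : ℕ) : y n * x n ^ k * y n = x n ^ ((2*n-1) * k) := by
  have h : y n * x n * (y n)⁻¹ = x n ^ (2*n-1) := by rw [y_inv]; exact rel3 n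
  calc y n * x n ^ k * y n = y n * x n ^ k * (y n)⁻¹ := by rw [y_inv]
    _ = (y n * x n * (y n)⁻¹) ^ k := (conj_pow).symm
    _ = (x n ^ (2*n-1)) ^ k := by rw [h]
    _ = x n ^ ((2*n-1) * k) := by rw [← pow_mul]

lemma xpow_mod (n : ℕ) (k : ℕ) : x n ^ k = x n ^ (k % (4*n)) := by
  conv_lhs => rw [← Nat.div_add_mod k (4*n)]
  rw [pow_add, pow_mul, rel1, one_pow, one_mul]

lemma xpow_cast (n : ℕ) (k : ℕ) : x n ^ k = x n ^ ((k : ZMod (4*n)).val) := by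
  rw [ZMod.val_natCast]; exact xpow_mod n k

end QD

namespace QD

lemma y_mul_xpow (n : ℕ) (k : ℕ) : y n * x n ^ k = x n ^ ((2*n-1)*k) * y n := by
  have h := y_conj_xpow n k
  calc y n * x n ^ k = y n * x n ^ k * (y n * y n) := by
        rw [← pow_two, rel2, mul_one]
    _ = (y n * x n ^ k * y n) * y n := by group
    _ = x n ^ ((2*n-1)*k) * y n := by rw [h]

lemma xpow_val_add (n : ℕ) (c d : ZMod (4*n)) [NeZero (4*n)] :
    x n ^ c.val * x n ^ d.val = x n ^ (c + d).val := by
  have h : ((c.val + d.val : ℕ) : ZMod (4*n)) = c + d := by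
    push_cast [ZMod.natCast_zmod_val]
    rfl
  rw [← pow_add, xpow_cast n (c.val + d.val), h]

lemma hφ (n : ℕ) (hn : 3 ≤ n) :
    ∀ r ∈ qdRel n, FreeGroup.lift ![X n, Y n] r = 1 := by
  intro r hr
  have h2n : 1 ≤ 2*n := by omega
  rcases hr with rfl | rfl | rfl
  · rw [map_pow, FreeGroup.lift_apply_of]
    show X n ^ (4*n) = 1
    rw [X_pow]
    ext <;> simp [one_def, ZMod.natCast_self]
  · rw [map_pow, FreeGroup.lift_apply_of]
    show Y n ^ 2 = 1
    rw [pow_two, mul_def]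
    ext <;> simp [Y, one_def, oneone]
  · simp only [map_mul, map_inv, map_pow, FreeGroup.lift_apply_of]
    rw [mul_inv_eq_one]
    show Y n * X n * Y n = X n ^ (2*n-1)
    rw [X_pow]
    have hc : ((2*n-1 : ℕ) : ZMod (4*n)) = u n := by
      push_cast [Nat.cast_sub h2n]; rfl
    rw [hc]
    simp only [mul_def, X, Y, val_one2, val_zero2, pow_one, pow_zero]
    ext <;> simp [oneone, hu n]

def φ (n : ℕ) (hn : 3 ≤ n) : G n →* M n := PresentedGroup.toGroup (hφ n hn)

lemma φ_x (n : ℕ) (hn : 3 ≤ n) : φ n hn (x n) = X n :=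
  PresentedGroup.toGroup.of (hφ n hn)

lemma φ_y (n : ℕ) (hn : 3 ≤ n) : φ n hn (y n) = Y n :=
  PresentedGroup.toGroup.of (hφ n hn)

def fhom (n : ℕ) (hn : 3 ≤ n) : M n →* G n where
  toFun g := x n ^ g.a.val * y n ^ g.e.val
  map_one' := by
    haveI : NeZero (4*n) := ⟨by omega⟩
    show x n ^ (0 : ZMod (4*n)).val * y n ^ (0 : ZMod 2).val = 1
    simp [ZMod.val_zero, val_zero2]
  map_mul' := by
    haveI : NeZero (4*n) := ⟨by omega⟩
    have h2n : 1 ≤ 2*n := by omega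
    rintro ⟨a,ε⟩ ⟨b,δ⟩
    show x n ^ (a + u n ^ ε.val * b).val * y n ^ (ε + δ).val
      = (x n ^ a.val * y n ^ ε.val) * (x n ^ b.val * y n ^ δ.val)
    rcases two_cases ε with hε | hε <;> subst hε
    · rw [val_zero2, pow_zero, pow_zero, one_mul, mul_one, zero_add, ← xpow_val_add]
      group
    · rw [val_one2, pow_one, pow_one]
      have key : x n ^ (a + u n * b).val = x n ^ a.val * x n ^ ((2*n-1) * b.val) := by
        have h : (((a.val + (2*n-1) * b.val) : ℕ) : ZMod (4*n)) = a + u n * b := by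
          push_cast [Nat.cast_sub h2n, ZMod.natCast_zmod_val]
          rfl
        rw [← pow_add, xpow_cast n (a.val + (2*n-1) * b.val), h]
      have hy : y n ^ ((1 + δ : ZMod 2)).val = y n * y n ^ δ.val := by
        rcases two_cases δ with hδ | hδ <;> subst hδ
        · simp [val_zero2]; rfl
        · rw [oneone, val_zero2, val_one2, pow_zero, pow_one, ← pow_two, rel2]
      rw [key, hy]
      calc x n ^ a.val * x n ^ ((2*n-1) * b.val) * (y n * y n ^ δ.val)
          = x n ^ a.val * (x n ^ ((2*n-1) * b.val) * y n) * y n ^ δ.val := by group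
        _ = x n ^ a.val * (y n * x n ^ b.val) * y n ^ δ.val := by rw [y_mul_xpow]
        _ = x n ^ a.val * y n * (x n ^ b.val * y n ^ δ.val) := by group

def iso (n : ℕ) (hn : 3 ≤ n) : G n ≃* M n :=
  MonoidHom.toMulEquiv (φ n hn) (fhom n hn)
    (by
      haveI : NeZero (4*n) := ⟨by omega⟩
      haveI : Fact (1 < 4*n) := ⟨by omega⟩
      refine PresentedGroup.ext fun i => ?_
      fin_cases i
      · show (fhom n hn) ((φ n hn) (x n)) = x n
        rw [φ_x]
        show x n ^ (1 : ZMod (4*n)).val * y n ^ (0 : ZMod 2).val = x n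
        rw [ZMod.val_one, val_zero2, pow_one, pow_zero, mul_one]
      · show (fhom n hn) ((φ n hn) (y n)) = y n
        rw [φ_y]
        show x n ^ (0 : ZMod (4*n)).val * y n ^ (1 : ZMod 2).val = y n
        rw [ZMod.val_zero, val_one2, pow_one, pow_zero, one_mul])
    (by
      haveI : NeZero (4*n) := ⟨by omega⟩
      refine MonoidHom.ext ?_
      rintro ⟨a,ε⟩
      show (φ n hn) (x n ^ a.val * y n ^ ε.val) = (⟨a, ε⟩ : M n)
      rw [map_mul, map_pow, map_pow, φ_x, φ_y, X_pow, ZMod.natCast_zmod_val]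
      rcases two_cases ε with hε | hε <;> subst hε
      · rw [val_zero2, pow_zero, mul_one]
      · rw [val_one2, pow_one, mul_def]
        ext <;> simp [Y, val_zero2])

end QD

namespace QD

def invSetoid {α : Type*} (f : α → α) (hf : Function.Involutive f) : Setoid α :=
  ⟨fun a b => b = a ∨ b = f a, by
    constructor
    · exact fun a => Or.inl rfl
    · rintro a b (rfl | rfl)
      · exact Or.inl rfl
      · exact Or.inr (hf a).symm
    · rintro a b c (rfl | rfl) (rfl | rfl)
      · exact Or.inl rfl
      · exact Or.inr rfl
      · exact Or.inr rfl
      · exact Or.inl (hf a)⟩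

lemma invSetoid_mk_eq {α : Type*} (f : α → α) (hf : Function.Involutive f) (a c : α) :
    (Quotient.mk (invSetoid f hf) a = Quotient.mk (invSetoid f hf) c) ↔ (a = c ∨ a = f c) := by
  rw [Quotient.eq]
  show (c = a ∨ c = f a) ↔ _
  constructor
  · rintro (rfl | rfl)
    · exact Or.inl rfl
    · exact Or.inr (hf a).symm
  · rintro (rfl | rfl)
    · exact Or.inl rfl
    · exact Or.inr (hf c).symm

lemma invol_key {α : Type*} [Fintype α] [DecidableEq α] (f : α → α)
    (hf : Function.Involutive f) :
    Nat.card (Quotient (invSetoid f hf)) * 2 =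
      Fintype.card α + Fintype.card {a : α // f a = a} := by
  classical
  letI : Fintype (Quotient (invSetoid f hf)) := Fintype.ofFinite _
  set Q := Quotient (invSetoid f hf) with hQ
  have h1 : Fintype.card α = ∑ q : Q, Fintype.card {a : α // Quotient.mk (invSetoid f hf) a = q} := by
    rw [← Fintype.card_sigma]
    exact Fintype.card_congr (Equiv.sigmaFiberEquiv _).symm
  have h2 : Fintype.card {a : α // f a = a} =
      ∑ q : Q, Fintype.card {b : {a : α // f a = a} // Quotient.mk (invSetoid f hf) b.1 = q} := by
    rw [← Fintype.card_sigma]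
    exact Fintype.card_congr (Equiv.sigmaFiberEquiv _).symm
  have key : ∀ q : Q, Fintype.card {a : α // Quotient.mk (invSetoid f hf) a = q} +
      Fintype.card {b : {a : α // f a = a} // Quotient.mk (invSetoid f hf) b.1 = q} = 2 := by
    refine Quotient.ind ?_
    intro c
    by_cases hc : f c = c
    · have e1 : Fintype.card {a : α // Quotient.mk (invSetoid f hf) a = Quotient.mk (invSetoid f hf) c} = 1 := by
        rw [Fintype.card_congr (Equiv.subtypeEquivRight (fun a => invSetoid_mk_eq f hf a c))]
        rw [Fintype.card_congr (Equiv.subtypeEquivRight (fun a => by rw [hc, or_self]))]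
        exact Fintype.card_subtype_eq c
      have e2 : Fintype.card {b : {a : α // f a = a} //
          Quotient.mk (invSetoid f hf) b.1 = Quotient.mk (invSetoid f hf) c} = 1 := by
        rw [Fintype.card_eq_one_iff]
        refine ⟨⟨⟨c, hc⟩, by rw [invSetoid_mk_eq]; exact Or.inl rfl⟩, ?_⟩
        rintro ⟨⟨a, ha⟩, hb⟩
        rw [invSetoid_mk_eq] at hb
        rcases hb with rfl | rfl
        · rfl
        · exact Subtype.ext (Subtype.ext hc)
      omega
    · have e1 : Fintype.card {a : α // Quotient.mk (invSetoid f hf) a = Quotient.mk (invSetoid f hf) c} = 2 := by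
        rw [Fintype.card_congr (Equiv.subtypeEquivRight (fun a => invSetoid_mk_eq f hf a c))]
        rw [Fintype.card_subtype]
        have : Finset.filter (fun a => a = c ∨ a = f c) Finset.univ = {c, f c} := by
          ext a; simp [Finset.mem_insert]
        rw [this]
        exact Finset.card_pair (fun h => hc h.symm)
      have e2 : Fintype.card {b : {a : α // f a = a} //
          Quotient.mk (invSetoid f hf) b.1 = Quotient.mk (invSetoid f hf) c} = 0 := by
        rw [Fintype.card_eq_zero_iff]
        constructor
        rintro ⟨⟨a, ha⟩, hb⟩
        rw [invSetoid_mk_eq] at hb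
        rcases hb with rfl | rfl
        · exact hc ha
        · rw [hf c] at ha
          exact hc ha.symm
      omega
  rw [h1, h2, ← Finset.sum_add_distrib]
  have : ∀ q ∈ Finset.univ, (Fintype.card {a : α // Quotient.mk (invSetoid f hf) a = q} +
      Fintype.card {b : {a : α // f a = a} // Quotient.mk (invSetoid f hf) b.1 = q}) = 2 := fun q _ => key q
  rw [Finset.sum_congr rfl this, Finset.sum_const, smul_eq_mul, Finset.card_univ,
    Nat.card_eq_fintype_card, mul_comm]


end QD

namespace QD

/-- the rotation setoid -/
def rotSetoid (n : ℕ) : Setoid (ZMod (4*n)) :=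
  invSetoid (fun a => u n * a) (fun a => by
    show u n * (u n * a) = a
    rw [← mul_assoc, hu n, one_mul])

/-- projection to `ZMod 4` -/
def π (n : ℕ) : ZMod (4*n) →+* ZMod 4 := ZMod.castHom ⟨n, rfl⟩ (ZMod 4)

section Facts
variable {n : ℕ}

lemma u_cast (hn : 3 ≤ n) : u n = ((2*n-1 : ℕ) : ZMod (4*n)) := by
  have h2n : 1 ≤ 2*n := by omega
  push_cast [Nat.cast_sub h2n]
  rfl

lemma u_sub_one_cast (hn : 3 ≤ n) : u n - 1 = ((2*n-2 : ℕ) : ZMod (4*n)) := by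
  have h2n : 2 ≤ 2*n := by omega
  push_cast [Nat.cast_sub h2n]
  unfold u; ring

lemma coprime_mn (hn : 3 ≤ n) (hodd : Odd n) : Nat.Coprime ((n-1)/2) n := by
  obtain ⟨m, hm⟩ := hodd
  have : (n-1)/2 = m := by omega
  rw [this, hm]
  have := (Nat.coprime_add_mul_right_right m 1 2).mpr (Nat.coprime_one_right m)
  rwa [show 1 + 2 * m = 2*m+1 by ring] at this

lemma u_mul_fixed_iff (hn : 3 ≤ n) (hodd : Odd n) (a : ZMod (4*n)) : u n * a = a ↔ n ∣ a.val := by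
  haveI : NeZero (4*n) := ⟨by omega⟩
  obtain ⟨m, hm⟩ := hodd
  have hco : Nat.Coprime m n := by
    have := coprime_mn hn ⟨m, hm⟩
    rwa [show (n-1)/2 = m by omega] at this
  have h1 : u n * a = a ↔ (u n - 1) * a = 0 := by
    rw [sub_mul, one_mul, sub_eq_zero]
  rw [h1, u_sub_one_cast hn]
  have h2 : ((2*n-2 : ℕ) : ZMod (4*n)) * a = (((2*n-2) * a.val : ℕ) : ZMod (4*n)) := by
    push_cast [ZMod.natCast_zmod_val]
    rfl
  rw [h2, ZMod.natCast_eq_zero_iff]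
  have h3 : 2*n-2 = 4*m := by omega
  rw [h3]
  constructor
  · intro h
    have h4 : n ∣ m * a.val := by
      have : 4*n ∣ 4*(m*a.val) := by rwa [show 4*(m*a.val) = 4*m*a.val by ring]
      exact (mul_dvd_mul_iff_left (by norm_num : (4:ℕ) ≠ 0)).mp this
    exact (Nat.Coprime.dvd_of_dvd_mul_left (Nat.coprime_comm.mp hco) h4)
  · rintro ⟨k, hk⟩
    exact ⟨m*k, by rw [hk]; ring⟩

lemma card_fixed (hn : 3 ≤ n) (hodd : Odd n) : Nat.card {a : ZMod (4*n) // u n * a = a} = 4 := by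
  classical
  haveI : NeZero (4*n) := ⟨by omega⟩
  have hn0 : 0 < n := by omega
  rw [Nat.card_congr (Equiv.subtypeEquivRight (fun a => u_mul_fixed_iff hn hodd a))]
  have e : {a : ZMod (4*n) // n ∣ a.val} ≃ Fin 4 := {
    toFun := fun a => ⟨a.1.val / n, by
      rw [Nat.div_lt_iff_lt_mul hn0]
      have := a.1.val_lt
      omega⟩
    invFun := fun k => ⟨((n * k.1 : ℕ) : ZMod (4*n)), by
      rw [ZMod.val_natCast_of_lt (by have hk := k.2; nlinarith)]
      exact ⟨k.1, rfl⟩⟩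
    left_inv := fun a => by
      ext
      simp only
      rw [Nat.mul_div_cancel' a.2, ZMod.natCast_zmod_val]
    right_inv := fun k => by
      ext
      simp only
      rw [ZMod.val_natCast_of_lt (by have hk := k.2; nlinarith), Nat.mul_div_cancel_left _ hn0] }
  rw [Nat.card_congr e, Nat.card_eq_fintype_card, Fintype.card_fin]

lemma card_rotQuot (hn : 3 ≤ n) (hodd : Odd n) : Nat.card (Quotient (rotSetoid n)) = 2*n+2 := by
  classical
  haveI : NeZero (4*n) := ⟨by omega⟩
  have h := invol_key (fun a : ZMod (4*n) => u n * a) (fun a => by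
    show u n * (u n * a) = a
    rw [← mul_assoc, hu n, one_mul])
  rw [ZMod.card, ← Nat.card_eq_fintype_card (α := {a : ZMod (4*n) // u n * a = a}),
    card_fixed hn hodd] at h
  have h2 : Nat.card (Quotient (rotSetoid n)) * 2 = 4*n + 4 := h
  omega

lemma π_def (hn : 3 ≤ n) (c : ZMod (4*n)) : π n c = ((c.val : ℕ) : ZMod 4) := by
  haveI : NeZero (4*n) := ⟨by omega⟩
  conv_lhs => rw [← ZMod.natCast_zmod_val c]
  rw [map_natCast]

lemma π_u (hn : 3 ≤ n) (hodd : Odd n) : π n (u n) = 1 := by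
  obtain ⟨m, hm⟩ := hodd
  rw [u_cast hn, map_natCast]
  have : ((1:ℕ) : ZMod 4) = 1 := by norm_num
  rw [← this, ZMod.natCast_eq_natCast_iff]
  show (2*n-1) % 4 = 1 % 4
  omega

lemma π_upow (hn : 3 ≤ n) (hodd : Odd n) (δ : ZMod 2) : π n (u n ^ δ.val) = 1 := by
  rcases two_cases δ with h | h <;> subst h
  · rw [val_zero2, pow_zero, map_one]
  · rw [val_one2, pow_one, π_u hn hodd]

lemma card_fiber (hn : 3 ≤ n) (hodd : Odd n) (v : ZMod 4) : Nat.card {c : ZMod (4*n) // π n c = v} = n := by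
  haveI : NeZero (4*n) := ⟨by omega⟩
  have e : {c : ZMod (4*n) // π n c = v} ≃ Fin n := {
    toFun := fun c => ⟨c.1.val / 4, by
      rw [Nat.div_lt_iff_lt_mul (by norm_num : 0 < 4)]
      have := c.1.val_lt
      omega⟩
    invFun := fun k => ⟨((v.val + 4 * k.1 : ℕ) : ZMod (4*n)), by
      rw [π_def hn, ZMod.val_natCast_of_lt (by
        have := k.2
        have hv : v.val < 4 := v.val_lt
        omega)]
      push_cast
      rw [ZMod.natCast_zmod_val]
      have h40 : (4 : ZMod 4) = 0 := by decide
      simp [h40]⟩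
    left_inv := fun c => by
      ext
      simp only
      have hv : v.val = c.1.val % 4 := by
        have h := c.2
        rw [π_def hn] at h
        have h2 := congrArg ZMod.val h
        rw [ZMod.val_natCast] at h2
        omega
      rw [hv, show c.1.val % 4 + 4 * (c.1.val / 4) = c.1.val from by omega,
        ZMod.natCast_zmod_val]
    right_inv := fun k => by
      ext
      simp only
      rw [ZMod.val_natCast_of_lt (by
        have := k.2
        have hv : v.val < 4 := v.val_lt
        omega)]
      have hv : v.val < 4 := v.val_lt
      omega }
  rw [Nat.card_congr e, Nat.card_eq_fintype_card, Fintype.card_fin]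

lemma solv (hn : 3 ≤ n) (hodd : Odd n) (d : ZMod (4*n)) (hd : π n d = 0) : ∃ b : ZMod (4*n), (1 - u n) * b = d := by
  haveI : NeZero (4*n) := ⟨by omega⟩
  haveI : NeZero n := ⟨by omega⟩
  obtain ⟨m, hm⟩ := hodd
  have hco : Nat.Coprime m n := by
    have := coprime_mn hn ⟨m, hm⟩
    rwa [show (n-1)/2 = m by omega] at this
  have h4 : (4:ℕ) ∣ d.val := by
    rw [π_def hn] at hd
    exact (ZMod.natCast_eq_zero_iff _ _).mp hd
  obtain ⟨k, hk⟩ := h4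
  set w : ZMod n := ((m : ZMod n))⁻¹ * (k : ZMod n) with hw
  refine ⟨-((w.val : ℕ) : ZMod (4*n)), ?_⟩
  have h1 : 1 - u n = -(((2*n-2:ℕ)) : ZMod (4*n)) := by
    rw [← u_sub_one_cast hn]; ring
  rw [h1]
  have h2 : -(((2*n-2:ℕ)) : ZMod (4*n)) * -((w.val : ℕ) : ZMod (4*n))
      = (((2*n-2) * w.val : ℕ) : ZMod (4*n)) := by push_cast; ring
  rw [h2]
  have hmod : m * w.val ≡ k [MOD n] := by
    rw [← ZMod.natCast_eq_natCast_iff]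
    push_cast
    rw [ZMod.natCast_zmod_val, hw, ← mul_assoc, ZMod.coe_mul_inv_eq_one m hco, one_mul]
  have hmod2 : 4 * (m * w.val) ≡ 4 * k [MOD 4*n] := Nat.ModEq.mul_left' 4 hmod
  have : (2*n-2) * w.val = 4 * (m * w.val) := by
    have : 2*n-2 = 4*m := by omega
    rw [this]; ring
  rw [this]
  calc ((4 * (m * w.val) : ℕ) : ZMod (4*n)) = ((4*k : ℕ) : ZMod (4*n)) := by
        rw [ZMod.natCast_eq_natCast_iff]; exact hmod2
    _ = d := by rw [← hk, ZMod.natCast_zmod_val]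

lemma refl_conj (hn : 3 ≤ n) (hodd : Odd n) (a : ZMod (4*n)) (h : M n) :
    IsConj (⟨a, 1⟩ : M n) h ↔ h.e = 1 ∧ π n h.a = π n a := by
  constructor
  · rintro hc
    rw [isConj_iff] at hc
    obtain ⟨g, hg⟩ := hc
    rw [conj_formula] at hg
    subst hg
    refine ⟨rfl, ?_⟩
    simp only [map_add, map_mul, map_sub, map_one]
    rw [π_upow hn hodd, val_one2, pow_one, π_u hn hodd]
    ring
  · rintro ⟨he, hπ⟩
    obtain ⟨c, hce⟩ : ∃ c : ZMod (4*n), h = ⟨c, 1⟩ := ⟨h.a, by ext <;> simp [he]⟩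
    subst hce
    simp only at hπ
    have hd : π n (c - a) = 0 := by rw [map_sub, hπ, sub_self]
    obtain ⟨b, hb⟩ := solv hn hodd (c - a) hd
    rw [isConj_iff]
    refine ⟨⟨b, 0⟩, ?_⟩
    rw [conj_formula]
    ext
    · show u n ^ (0 : ZMod 2).val * a + (1 - u n ^ (1 : ZMod 2).val) * b = c
      rw [val_zero2, val_one2, pow_zero, pow_one, one_mul, hb]
      ring
    · rfl

end Facts

end QD

namespace QD

lemma iso_apply (n : ℕ) (hn : 3 ≤ n) (g : G n) : iso n hn g = φ n hn g := rfl

lemma isConj_equiv {A B : Type*} [Group A] [Group B] (E : A ≃* B) (a b : A) :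
    IsConj (E a) (E b) ↔ IsConj a b := by
  constructor
  · intro h
    have := E.symm.toMonoidHom.map_isConj h
    simpa using this
  · exact fun h => E.toMonoidHom.map_isConj h

/-- conjugacy classes equivalence under a `MulEquiv` -/
def conjClassesCongr {A B : Type*} [Group A] [Group B] (E : A ≃* B) :
    ConjClasses A ≃ ConjClasses B where
  toFun := ConjClasses.map E.toMonoidHom
  invFun := ConjClasses.map E.symm.toMonoidHom
  left_inv := by
    refine Quotient.ind ?_
    intro a
    show ConjClasses.map _ (ConjClasses.map _ (ConjClasses.mk a)) = ConjClasses.mk a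
    simp [ConjClasses.map, ← ConjClasses.quotient_mk_eq_mk]
    rfl
  right_inv := by
    refine Quotient.ind ?_
    intro a
    show ConjClasses.map _ (ConjClasses.map _ (ConjClasses.mk a)) = ConjClasses.mk a
    simp [ConjClasses.map, ← ConjClasses.quotient_mk_eq_mk]
    rfl

section Main
variable {n : ℕ}

/-- invariant of a conjugacy class -/
def F0 (n : ℕ) : M n → Quotient (rotSetoid n) ⊕ ZMod 4 := fun g =>
  if g.e = 0 then Sum.inl (Quotient.mk (rotSetoid n) g.a) else Sum.inr (π n g.a)

lemma rot_mk_u (a : ZMod (4*n)) :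
    Quotient.mk (rotSetoid n) (u n * a) = Quotient.mk (rotSetoid n) a := by
  apply Quotient.sound
  show a = u n * a ∨ a = u n * (u n * a)
  exact Or.inr (by rw [← mul_assoc, hu n, one_mul])

lemma F0_conj (hn : 3 ≤ n) (hodd : Odd n) :
    ∀ g h : M n, IsConj g h → F0 n g = F0 n h := by
  rintro ⟨a, ε⟩ h hc
  rw [isConj_iff] at hc
  obtain ⟨c, hc⟩ := hc
  subst hc
  rw [conj_formula]
  rcases two_cases ε with he | he <;> subst he
  · simp only [F0, reduceIte, val_zero2, pow_zero, sub_self, zero_mul, add_zero]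
    congr 1
    rcases two_cases c.e with hce | hce <;> rw [hce]
    · rw [val_zero2, pow_zero, one_mul]
    · rw [val_one2, pow_one, rot_mk_u]
  · simp only [F0]
    rw [if_neg (show ¬(1:ZMod 2) = 0 by decide), if_neg (show ¬(1:ZMod 2) = 0 by decide)]
    congr 1
    simp only [map_add, map_mul, map_sub, map_one, val_one2, pow_one]
    rw [π_upow hn hodd c.e, π_u hn hodd]
    ring

lemma G0_wd (a b : ZMod (4*n)) (hr : b = a ∨ b = u n * a) :
    ConjClasses.mk (⟨a, 0⟩ : M n) = ConjClasses.mk (⟨b, 0⟩ : M n) := by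
  rcases hr with rfl | rfl
  · rfl
  · rw [ConjClasses.mk_eq_mk_iff_isConj, isConj_iff]
    refine ⟨Y n, ?_⟩
    rw [conj_formula]
    ext
    · show u n ^ (1 : ZMod 2).val * a + (1 - u n ^ (0 : ZMod 2).val) * (0 : ZMod (4*n)) = u n * a
      rw [val_one2, val_zero2, pow_one, pow_zero]
      ring
    · rfl

/-- inverse map -/
def G0 (n : ℕ) : Quotient (rotSetoid n) ⊕ ZMod 4 → ConjClasses (M n)
  | Sum.inl q => Quotient.lift (fun a => ConjClasses.mk (⟨a, 0⟩ : M n))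
      (fun a b hr => G0_wd a b (show b = a ∨ b = u n * a from hr)) q
  | Sum.inr v => ConjClasses.mk (⟨((v.val : ℕ) : ZMod (4*n)), 1⟩ : M n)

def classesEquiv (hn : 3 ≤ n) (hodd : Odd n) :
    ConjClasses (M n) ≃ (Quotient (rotSetoid n) ⊕ ZMod 4) where
  toFun := Quotient.lift (F0 n) (F0_conj hn hodd)
  invFun := G0 n
  left_inv := by
    refine Quotient.ind ?_
    intro g
    show G0 n (F0 n g) = ConjClasses.mk g
    rcases two_cases g.e with he | he
    · rw [F0, if_pos he]
      show ConjClasses.mk (⟨g.a, 0⟩ : M n) = ConjClasses.mk g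
      congr 1
      ext
      · rfl
      · rw [he]
    · rw [F0, if_neg (by rw [he]; exact one_ne_zero)]
      show ConjClasses.mk (⟨(((π n g.a).val : ℕ) : ZMod (4*n)), 1⟩ : M n) = ConjClasses.mk g
      rw [ConjClasses.mk_eq_mk_iff_isConj, refl_conj hn hodd]
      exact ⟨he, by rw [map_natCast, ZMod.natCast_zmod_val]⟩
  right_inv := by
    rintro (q | v)
    · induction q using Quotient.ind with
      | _ a =>
        show Quotient.lift (F0 n) (F0_conj hn hodd) (ConjClasses.mk (⟨a, 0⟩ : M n)) = _
        show F0 n ⟨a, 0⟩ = _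
        simp only [F0, reduceIte]
    · show Quotient.lift (F0 n) (F0_conj hn hodd)
        (ConjClasses.mk (⟨((v.val : ℕ) : ZMod (4*n)), 1⟩ : M n)) = _
      show F0 n ⟨((v.val : ℕ) : ZMod (4*n)), 1⟩ = _
      simp only [F0]
      rw [if_neg (show ¬(1:ZMod 2) = 0 by decide), map_natCast, ZMod.natCast_zmod_val]

lemma card_conjClasses_M (hn : 3 ≤ n) (hodd : Odd n) :
    Nat.card (ConjClasses (M n)) = 2*n+6 := by
  haveI : NeZero (4*n) := ⟨by omega⟩
  haveI : Finite (ZMod (4*n)) := inferInstance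
  rw [Nat.card_congr (classesEquiv hn hodd), Nat.card_sum, card_rotQuot hn hodd,
    Nat.card_zmod]

lemma card_reflClass (hn : 3 ≤ n) (hodd : Odd n) (w : ZMod (4*n)) :
    Nat.card {h : M n | IsConj (⟨w, 1⟩ : M n) h} = n := by
  have E : {h : M n // IsConj (⟨w, 1⟩ : M n) h} ≃ {c : ZMod (4*n) // π n c = π n w} := {
    toFun := fun h => ⟨h.1.a, ((refl_conj hn hodd w h.1).1 h.2).2⟩
    invFun := fun c => ⟨⟨c.1, 1⟩, (refl_conj hn hodd w ⟨c.1, 1⟩).2 ⟨rfl, c.2⟩⟩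
    left_inv := fun h => by
      apply Subtype.ext
      ext
      · rfl
      · exact (((refl_conj hn hodd w h.1).1 h.2).1).symm
    right_inv := fun c => rfl }
  exact (Nat.card_congr E).trans (card_fiber hn hodd _)

lemma central_rot (a : ZMod (4*n)) (ha : u n * a = a) :
    (⟨a, 0⟩ : M n) ∈ Subgroup.center (M n) := by
  rw [Subgroup.mem_center_iff]
  intro g
  rw [mul_def, mul_def]
  ext
  · show g.a + u n ^ g.e.val * a = a + u n ^ (0 : ZMod 2).val * g.a
    have : u n ^ g.e.val * a = a := by
      rcases two_cases g.e with he | he <;> rw [he]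
      · rw [val_zero2, pow_zero, one_mul]
      · rw [val_one2, pow_one, ha]
    rw [this, val_zero2, pow_zero, one_mul]
    ring
  · show g.e + 0 = 0 + g.e
    ring

lemma central_xpow (hn : 3 ≤ n) (hodd : Odd n) (j : ℕ) (hj : n ∣ j) :
    x n ^ j ∈ Subgroup.center (G n) := by
  haveI : NeZero (4*n) := ⟨by omega⟩
  set E := iso n hn with hE
  rw [Subgroup.mem_center_iff]
  intro g
  apply E.injective
  rw [map_mul, map_mul]
  have hEz : E (x n ^ j) = (⟨((j : ℕ) : ZMod (4*n)), 0⟩ : M n) := by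
    rw [hE, iso_apply, map_pow, φ_x, X_pow]
  have hcen : (⟨((j : ℕ) : ZMod (4*n)), 0⟩ : M n) ∈ Subgroup.center (M n) := by
    apply central_rot
    rw [u_mul_fixed_iff hn hodd, ZMod.val_natCast]
    have h2 := Nat.mod_add_div j (4*n)
    have h1 : j % (4*n) = j - 4*n*(j/(4*n)) := by omega
    rw [h1]
    exact Nat.dvd_sub hj ⟨4*(j/(4*n)), by ring⟩
  rw [hEz]
  exact Subgroup.mem_center_iff.mp hcen (E g)

end Main

end QD

theorem stmt10 (n : ℕ) (hn : 3 ≤ n) (hodd : Odd n) :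
    Nat.card (ConjClasses (G n)) = 2 * n + 6 ∧
    Nat.card {h : G n | IsConj (y n) h} = n ∧
    Nat.card {h : G n | IsConj (y n * x n) h} = n ∧
    Nat.card {h : G n | IsConj (y n * x n ^ 2) h} = n ∧
    Nat.card {h : G n | IsConj (y n * x n ^ 3) h} = n ∧
    x n ^ n ∈ Subgroup.center (G n) ∧
    x n ^ (2 * n) ∈ Subgroup.center (G n) ∧
    x n ^ (3 * n) ∈ Subgroup.center (G n) := by
  classical
  haveI : NeZero (4*n) := ⟨by omega⟩
  set E := QD.iso n hn with hE
  have hcard : ∀ z : G n,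
      Nat.card {h : G n | IsConj z h} = Nat.card {h : QD.M n | IsConj (E z) h} := by
    intro z
    exact Nat.card_congr (Equiv.subtypeEquiv E.toEquiv
      (fun h => (QD.isConj_equiv E z h).symm))
  have hEy : E (y n) = QD.Y n := by rw [hE, QD.iso_apply, QD.φ_y]
  have hExk : ∀ k : ℕ, E (y n * x n ^ k) = (⟨QD.u n * (k : ZMod (4*n)), 1⟩ : QD.M n) := by
    intro k
    rw [hE, QD.iso_apply, map_mul, map_pow, QD.φ_y, QD.φ_x, QD.Y_mul_X_pow]
  refine ⟨?_, ?_, ?_, ?_, ?_, ?_, ?_, ?_⟩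
  · rw [Nat.card_congr (QD.conjClassesCongr E), QD.card_conjClasses_M hn hodd]
  · rw [hcard, hEy]
    exact QD.card_reflClass hn hodd 0
  · rw [hcard]
    have : E (y n * x n) = (⟨QD.u n * ((1:ℕ) : ZMod (4*n)), 1⟩ : QD.M n) := by
      have := hExk 1
      rwa [pow_one] at this
    rw [this]
    exact QD.card_reflClass hn hodd _
  · rw [hcard, hExk 2]
    exact QD.card_reflClass hn hodd _
  · rw [hcard, hExk 3]
    exact QD.card_reflClass hn hodd _
  · exact QD.central_xpow hn hodd n dvd_rfl
  · exact QD.central_xpow hn hodd (2*n) ⟨2, by ring⟩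
  · exact QD.central_xpow hn hodd (3*n) ⟨3, by ring⟩
end
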